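/- arXiv:2306.15145 — 2 statements merged into one kernel-verified Lean document; each statement's English description precedes it below -/
import Mathlib

section
/- Let G be a core input-output network, let ρ be a super-simple node of G, and let κ be any node of G. Then ρ is a super-simple node of the input-output network G(κ) (same graph with input ι and output κ) if and only if ρ ⪯ σᵘ(κ), where σᵘ(κ) = κ if κ is simple, and σᵘ(κ) is a minimal upstream simple node admitting an appendage path to κ if κ is appendage. -/
/-- A simple (directed) path from `a` to `b`: nonempty node list, consecutive arrows,
no repeated nodes. -/
def IsSPath {V : Type*} (E : V → V → Prop) (a b : V) (p : List V) : Prop :=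
  p.Chain' E ∧ p.Nodup ∧ p.head? = some a ∧ p.getLast? = some b

/-- An `ιo`-simple path. -/
def IoSPath {V : Type*} (E : V → V → Prop) (ι o : V) (p : List V) : Prop :=
  IsSPath E ι o p

/-- A node is simple if it lies on some `ιo`-simple path. -/
def SimpleNode {V : Type*} (E : V → V → Prop) (ι o v : V) : Prop :=
  ∃ p, IoSPath E ι o p ∧ v ∈ p

/-- A node is appendage if it is not simple. -/
def Appendage {V : Type*} (E : V → V → Prop) (ι o v : V) : Prop :=
  ¬ SimpleNode E ι o v

/-- A node is super-simple if it lies on every `ιo`-simple path. -/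
def SuperSimple {V : Type*} (E : V → V → Prop) (ι o v : V) : Prop :=
  ∀ p, IoSPath E ι o p → v ∈ p

/-- A core network: every node is reachable from `ι` and reaches `o`. -/
def Core {V : Type*} (E : V → V → Prop) (ι o : V) : Prop :=
  ∀ v, Relation.ReflTransGen E ι v ∧ Relation.ReflTransGen E v o

/-- `a` occurs (strictly) before `b` on some `ιo`-simple path. -/
def OccBefore {V : Type*} (E : V → V → Prop) (ι o a b : V) : Prop :=
  ∃ p, IoSPath E ι o p ∧ [a, b].Sublist p

/-- Strict partial order on simple nodes induced by super-simple nodes: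
`a ≺ b` iff there is a super-simple node `ρ` with `a` (weakly) before `ρ`
and `ρ` (weakly) before `b` along `ιo`-simple paths, and `a ≠ b`. -/
def SLt {V : Type*} (E : V → V → Prop) (ι o a b : V) : Prop :=
  a ≠ b ∧ ∃ ρ, SuperSimple E ι o ρ ∧ (a = ρ ∨ OccBefore E ι o a ρ) ∧
    (b = ρ ∨ OccBefore E ι o ρ b)

/-- Adjacent (consecutive) super-simple nodes. -/
def AdjSS {V : Type*} (E : V → V → Prop) (ι o ρ ρ' : V) : Prop :=
  SuperSimple E ι o ρ ∧ SuperSimple E ι o ρ' ∧ SLt E ι o ρ ρ' ∧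
  ¬ ∃ ρ'', SuperSimple E ι o ρ'' ∧ SLt E ι o ρ ρ'' ∧ SLt E ι o ρ'' ρ'

/-- The simple subnetwork between adjacent super-simple nodes `ρ ≺ ρ'`. -/
def SimpleSubnet {V : Type*} (E : V → V → Prop) (ι o ρ ρ' : V) : Set V :=
  {σ | SimpleNode E ι o σ ∧ SLt E ι o ρ σ ∧ SLt E ι o σ ρ'}

/-- Two simple nodes lie in the same simple subnetwork. -/
def SameSimpleSubnet {V : Type*} (E : V → V → Prop) (ι o a b : V) : Prop :=
  ∃ ρ ρ', AdjSS E ι o ρ ρ' ∧ a ∈ SimpleSubnet E ι o ρ ρ' ∧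
    b ∈ SimpleSubnet E ι o ρ ρ'

/-- `a ⪯ b`: either `a ≺ b`, or `a = b` is super-simple, or `a`, `b` lie in
the same simple subnetwork. -/
def SLe {V : Type*} (E : V → V → Prop) (ι o a b : V) : Prop :=
  SLt E ι o a b ∨ (a = b ∧ SuperSimple E ι o a) ∨ SameSimpleSubnet E ι o a b

/-- An appendage path from `a` to `b`: a simple path containing an appendage
node, all of whose nodes other than the endpoints are appendage. -/
def AppPath {V : Type*} (E : V → V → Prop) (ι o a b : V) (p : List V) : Prop :=
  IsSPath E a b p ∧ (∃ x ∈ p, Appendage E ι o x) ∧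
  ∀ x ∈ p, x ≠ a → x ≠ b → Appendage E ι o x

/-- Reachability inside a set of nodes. -/
def ReachIn {V : Type*} (E : V → V → Prop) (s : Set V) (a b : V) : Prop :=
  Relation.ReflTransGen (fun x y => E x y ∧ x ∈ s ∧ y ∈ s) a b

/-- `a` and `b` belong to the same transitive (strongly connected) component
of the subnetwork induced on `s`. -/
def SameTCIn {V : Type*} (E : V → V → Prop) (s : Set V) (a b : V) : Prop :=
  a ∈ s ∧ b ∈ s ∧ ReachIn E s a b ∧ ReachIn E s b a

/-- A super-appendage node: an appendage node whose transitive component in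
every complementary subnetwork `C_S` consists only of appendage nodes. -/
def SuperAppendage {V : Type*} (E : V → V → Prop) (ι o τ : V) : Prop :=
  Appendage E ι o τ ∧ ∀ p, IoSPath E ι o p → τ ∉ p →
    ∀ x, SameTCIn E {v | v ∉ p} τ x → Appendage E ι o x

/-- An appendage subnetwork: a transitive component of the subnetwork of
super-appendage nodes. -/
def IsAppSubnet {V : Type*} (E : V → V → Prop) (ι o : V) (A : Set V) : Prop :=
  ∃ τ, SuperAppendage E ι o τ ∧
    A = {x | SameTCIn E {v | SuperAppendage E ι o v} τ x}

/-- There is an appendage path from `σ` to `κ`. -/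
def HasAppPathTo {V : Type*} (E : V → V → Prop) (ι o σ κ : V) : Prop :=
  ∃ p, AppPath E ι o σ κ p

/-- `σ = σᵘ(κ)`: if `κ` is simple then `σ = κ`; otherwise `σ` is a minimal
upstream simple node with an appendage path to `κ`. -/
def IsSigmaU {V : Type*} (E : V → V → Prop) (ι o κ σ : V) : Prop :=
  (SimpleNode E ι o κ ∧ σ = κ) ∨
  (Appendage E ι o κ ∧ SimpleNode E ι o σ ∧ HasAppPathTo E ι o σ κ ∧
    ∀ σ', SimpleNode E ι o σ' → HasAppPathTo E ι o σ' κ → ¬ SLt E ι o σ' σ)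

/-- There is an appendage path from some node of `A` to `σ`. -/
def HasAppPathFromSet {V : Type*} (E : V → V → Prop) (ι o : V) (A : Set V)
    (σ : V) : Prop :=
  ∃ τ ∈ A, ∃ p, AppPath E ι o τ σ p

/-- `σ = σᵈ(A)`: a maximal downstream simple node with an appendage path
from `A`. -/
def IsSigmaD {V : Type*} (E : V → V → Prop) (ι o : V) (A : Set V) (σ : V) : Prop :=
  SimpleNode E ι o σ ∧ HasAppPathFromSet E ι o A σ ∧
    ∀ σ', SimpleNode E ι o σ' → HasAppPathFromSet E ι o A σ' → ¬ SLt E ι o σ σ'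

/-- A simple (directed) cycle, given by its list of distinct nodes with a
closing arrow from the last node back to the first. -/
def IsSimpleCycle {V : Type*} (E : V → V → Prop) (c : List V) : Prop :=
  c.Chain' E ∧ c.Nodup ∧ ∃ a b, c.head? = some a ∧ c.getLast? = some b ∧ E b a

/-- `τ` is a linked appendage node of the simple subnetwork determined by the
adjacent super-simple pair `ρ ≺ ρ'`. -/
def Linked {V : Type*} (E : V → V → Prop) (ι o ρ ρ' τ : V) : Prop :=
  Appendage E ι o τ ∧ ¬ SuperAppendage E ι o τ ∧
  ∃ p, IoSPath E ι o p ∧ τ ∉ p ∧ ∀ x, SameTCIn E {v | v ∉ p} τ x →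
    x = τ ∨ x ∈ SimpleSubnet E ι o ρ ρ' ∨
      (Appendage E ι o x ∧ ¬ SuperAppendage E ι o x)

/-- The structural subnetwork determined by adjacent super-simple nodes
`ρ ≺ ρ'`: the two super-simple nodes, the simple subnetwork between them,
and its linked appendage nodes. -/
def StructuralSet {V : Type*} (E : V → V → Prop) (ι o ρ ρ' : V) : Set V :=
  {ρ, ρ'} ∪ SimpleSubnet E ι o ρ ρ' ∪ {τ | Linked E ι o ρ ρ' τ}

/-- `L` is a structural subnetwork. -/
def IsStructSubnet {V : Type*} (E : V → V → Prop) (ι o : V) (L : Set V) : Prop :=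
  ∃ ρ ρ', AdjSS E ι o ρ ρ' ∧ L = StructuralSet E ι o ρ ρ'

/-!
A super-simple node of a network lies on every walk from input to output, not only on every
simple path, because walks shorten to simple paths. If `σᵘ(κ) ≺ ρ`, the `ιo`-simple path up to
`σᵘ(κ)` followed by the appendage path to `κ` is a walk from `ι` to `κ` avoiding `ρ`. If
`ρ ⪯ σᵘ(κ)` and some `ικ`-simple path avoided `ρ`, its last simple node `σ'` would have an
appendage path to `κ` and satisfy `σ' ≺ ρ ⪯ σᵘ(κ)`, against the minimality of `σᵘ(κ)`.
-/

namespace List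

variable {α : Type*}

theorem pair_sublist_iff {x y : α} {l : List α} :
    [x, y] <+ l ↔ ∃ u v, l = u ++ x :: v ∧ y ∈ v := by
  constructor
  · rintro h
    obtain ⟨r₁, r₂, rfl, hx, hy⟩ := cons_sublist_iff.1 h
    obtain ⟨u, v, rfl⟩ := append_of_mem hx
    exact ⟨u, v ++ r₂, by simp, mem_append_right v (singleton_sublist.1 hy)⟩
  · rintro ⟨u, v, rfl, hy⟩
    exact ((singleton_sublist.2 hy).cons_cons x).trans (sublist_append_right u _)

theorem pair_sublist_append_cons {x y z : α} {u v : List α} (hx : x ∈ u ++ [y]) (hz : z ∈ v) :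
    [x, z] <+ u ++ y :: v := by
  simpa using (singleton_sublist.2 hx).append (singleton_sublist.2 hz)

theorem pair_sublist_or_pair_sublist {a b : α} {l : List α} (ha : a ∈ l) (hb : b ∈ l)
    (hne : a ≠ b) : [a, b] <+ l ∨ [b, a] <+ l := by
  obtain ⟨u, v, rfl⟩ := append_of_mem ha
  rcases mem_append.1 hb with hb | hb
  · obtain ⟨s, t, rfl⟩ := append_of_mem hb
    exact .inr (pair_sublist_iff.2 ⟨s, t ++ a :: v, by simp, by simp⟩)
  · rcases mem_cons.1 hb with rfl | hb
    · exact absurd rfl hne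
    · exact .inl (pair_sublist_iff.2 ⟨u, v, rfl, hb⟩)

theorem exists_split_at_last (P : α → Prop) :
    ∀ {l : List α}, (∃ x ∈ l, P x) → ∃ u x v, l = u ++ x :: v ∧ P x ∧ ∀ y ∈ v, ¬ P y
  | [], h => by simp at h
  | c :: t, h => by
    by_cases ht : ∃ x ∈ t, P x
    · obtain ⟨u, x, v, rfl, hx, hv⟩ := exists_split_at_last P ht
      exact ⟨c :: u, x, v, rfl, hx, hv⟩
    · have hc : P c := by
        obtain ⟨x, hx, hPx⟩ := h
        rcases mem_cons.1 hx with rfl | hx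
        exacts [hPx, absurd ⟨x, hx, hPx⟩ ht]
      exact ⟨[], c, t, rfl, hc, fun y hy hPy => ht ⟨y, hy, hPy⟩⟩

end List

def IsWalk {V : Type*} (E : V → V → Prop) (a b : V) (w : List V) : Prop :=
  w.IsChain E ∧ w.head? = some a ∧ w.getLast? = some b

section Network

variable {V : Type*} {E : V → V → Prop} {ι o a b c ρ σ κ : V} {u v w : List V}

theorem IsWalk.head_mem (h : IsWalk E a b w) : a ∈ w :=
  List.mem_of_mem_head? h.2.1

theorem IsWalk.last_mem (h : IsWalk E a b w) : b ∈ w :=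
  List.mem_of_mem_getLast? h.2.2

theorem IsSPath.isWalk (h : IsSPath E a b w) : IsWalk E a b w :=
  ⟨h.1, h.2.2⟩

theorem IsWalk.append {w₁ w₂ : List V} (h₁ : IsWalk E a b w₁) (h₂ : IsWalk E b c w₂) :
    IsWalk E a c (w₁ ++ w₂.tail) := by
  obtain ⟨u, rfl⟩ := List.getLast?_eq_some_iff.1 h₁.2.2
  obtain ⟨v, rfl⟩ := List.head?_eq_some_iff.1 h₂.2.1
  refine ⟨h₁.1.append_overlap h₂.1 (List.cons_ne_nil b []), ?_, ?_⟩
  · simpa [List.head?_append] using h₁.2.1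
  · simpa using h₂.2.2

theorem IsWalk.split {x : V} (h : IsWalk E a b (u ++ x :: v)) :
    IsWalk E a x (u ++ [x]) ∧ IsWalk E x b (x :: v) := by
  refine ⟨⟨h.1.prefix ⟨v, by simp⟩, ?_, by simp⟩, ⟨h.1.suffix ⟨u, rfl⟩, rfl, ?_⟩⟩
  · cases u <;> simpa using h.2.1
  · simpa [List.getLast?_append_cons] using h.2.2

theorem IsSPath.suffix {x : V} (h : IsSPath E a b (u ++ x :: v)) : IsSPath E x b (x :: v) :=
  have hw := (h.isWalk.split).2
  ⟨hw.1, (List.suffix_append u _).sublist.nodup h.2.1, hw.2⟩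

theorem IsWalk.exists_isSPath_subset :
    ∀ {w : List V} {a b : V}, IsWalk E a b w → ∃ p, IsSPath E a b p ∧ p ⊆ w
  | [], _, _, h => by simp [IsWalk] at h
  | [x], a, b, ⟨_, ha, hb⟩ => by
    cases Option.some_injective _ ha
    cases Option.some_injective _ hb
    exact ⟨[x], ⟨List.isChain_singleton x, List.nodup_singleton x, rfl, rfl⟩, fun _ h => h⟩
  | x :: y :: w, a, b, ⟨hc, ha, hb⟩ => by
    cases Option.some_injective _ ha
    obtain ⟨hxy, hc⟩ := List.isChain_cons_cons.1 hc
    obtain ⟨p, hp, hpw⟩ := IsWalk.exists_isSPath_subset (w := y :: w) ⟨hc, rfl, hb⟩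
    by_cases hxp : x ∈ p
    · obtain ⟨u, v, rfl⟩ := List.append_of_mem hxp
      exact ⟨x :: v, hp.suffix, fun z hz => .tail _ (hpw (by simp_all))⟩
    · obtain ⟨p', rfl⟩ := List.head?_eq_some_iff.1 hp.2.2.1
      refine ⟨x :: y :: p', ⟨List.isChain_cons_cons.2 ⟨hxy, hp.1⟩,
        List.nodup_cons.2 ⟨hxp, hp.2.1⟩, rfl, ?_⟩, List.cons_subset_cons x hpw⟩
      simpa [List.getLast?_cons_cons] using hp.2.2.2

theorem SuperSimple.mem_of_isWalk (hρ : SuperSimple E a b ρ) (hw : IsWalk E a b w) : ρ ∈ w :=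
  let ⟨p, hp, hpw⟩ := hw.exists_isSPath_subset
  hpw (hρ p hp)

theorem OccBefore.ne (h : OccBefore E ι o a b) : a ≠ b := by
  rintro rfl
  obtain ⟨p, hp, hs⟩ := h
  simpa using hs.nodup hp.2.1

theorem OccBefore.exists_isWalk_input_not_mem (h : OccBefore E ι o a b) :
    ∃ w, IsWalk E ι a w ∧ b ∉ w := by
  obtain ⟨p, hp, hs⟩ := h
  obtain ⟨u, v, rfl, hb⟩ := List.pair_sublist_iff.1 hs
  have hdisj := List.disjoint_of_nodup_append (l₁ := u ++ [a]) (by simpa using hp.2.1)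
  exact ⟨u ++ [a], (hp.isWalk.split).1, fun h => hdisj h hb⟩

theorem OccBefore.exists_isWalk_output_not_mem (h : OccBefore E ι o a b) :
    ∃ w, IsWalk E b o w ∧ a ∉ w := by
  obtain ⟨p, hp, hs⟩ := h
  obtain ⟨u, v, rfl, hb⟩ := List.pair_sublist_iff.1 hs
  obtain ⟨v₁, v₂, rfl⟩ := List.append_of_mem hb
  have hp' : IsSPath E ι o ((u ++ a :: v₁) ++ b :: v₂) := by simpa [IoSPath] using hp
  have hdisj := List.disjoint_of_nodup_append hp'.2.1
  exact ⟨b :: v₂, (hp'.isWalk.split).2, fun h => hdisj (by simp) h⟩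

theorem SuperSimple.mem_of_isWalk_of_occBefore (hρ : SuperSimple E ι o ρ)
    (h : ρ = a ∨ OccBefore E ι o ρ a) (hw : IsWalk E ι a w) : ρ ∈ w := by
  rcases h with rfl | h
  · exact hw.last_mem
  obtain ⟨w', hw', hρw'⟩ := h.exists_isWalk_output_not_mem
  rcases List.mem_append.1 (hρ.mem_of_isWalk (hw.append hw')) with h | h
  · exact h
  · exact absurd (List.mem_of_mem_tail h) hρw'

theorem SuperSimple.occBefore_trans (hρ : SuperSimple E ι o ρ) (h₁ : OccBefore E ι o ρ b)
    (h₂ : OccBefore E ι o b c) : OccBefore E ι o ρ c := by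
  obtain ⟨p, hp, hs⟩ := h₂
  obtain ⟨u, v, rfl, hc⟩ := List.pair_sublist_iff.1 hs
  have hρu := hρ.mem_of_isWalk_of_occBefore (.inr h₁) (hp.isWalk.split).1
  exact ⟨_, hp, List.pair_sublist_append_cons hρu hc⟩

theorem SuperSimple.trichotomy (hρ : SuperSimple E ι o ρ) (hσ : SimpleNode E ι o σ) :
    ρ = σ ∨ OccBefore E ι o ρ σ ∨ OccBefore E ι o σ ρ := by
  obtain ⟨p, hp, hσp⟩ := hσ
  by_cases hρσ : ρ = σ
  · exact .inl hρσ
  · exact .inr ((List.pair_sublist_or_pair_sublist (hρ p hp) hσp hρσ).imp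
      (fun h => ⟨p, hp, h⟩) (fun h => ⟨p, hp, h⟩))

theorem SuperSimple.occBefore_of_not_mem (hρ : SuperSimple E ι o ρ) (hσ : SimpleNode E ι o σ)
    (hw : IsWalk E ι σ w) (hρw : ρ ∉ w) : OccBefore E ι o σ ρ := by
  obtain h | h := or_assoc.2 (hρ.trichotomy hσ)
  · exact absurd (hρ.mem_of_isWalk_of_occBefore h hw) hρw
  · exact h

theorem SuperSimple.sLe_iff (hρ : SuperSimple E ι o ρ) :
    SLe E ι o ρ σ ↔ ρ = σ ∨ OccBefore E ι o ρ σ := by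
  constructor
  · rintro (⟨hne, ρ₀, -, h₁, h₂⟩ | ⟨h, -⟩ | ⟨ρ₁, ρ₂, hadj, ⟨-, h₁, h₂⟩, -⟩)
    · rcases h₁ with rfl | h₁ <;> rcases h₂ with rfl | h₂
      · exact absurd rfl hne
      · exact .inr h₂
      · exact .inr h₁
      · exact .inr (hρ.occBefore_trans h₁ h₂)
    · exact .inl h
    · exact absurd ⟨ρ, hρ, h₁, h₂⟩ hadj.2.2.2
  · rintro (rfl | h)
    · exact .inr (.inl ⟨rfl, hρ⟩)
    · exact .inl ⟨h.ne, ρ, hρ, .inl rfl, .inr h⟩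

theorem IsSigmaU.simpleNode (h : IsSigmaU E ι o κ σ) : SimpleNode E ι o σ := by
  rcases h with ⟨hκ, rfl⟩ | ⟨-, hσ, -⟩
  exacts [hκ, hσ]

theorem IsSigmaU.exists_isWalk (h : IsSigmaU E ι o κ σ) :
    ∃ w, IsWalk E σ κ w ∧ ∀ x ∈ w, SimpleNode E ι o x → x = σ := by
  rcases h with ⟨-, rfl⟩ | ⟨hκ, -, ⟨r, hr, -, hint⟩, -⟩
  · exact ⟨[σ], ⟨List.isChain_singleton σ, rfl, rfl⟩, fun x hx _ => List.eq_of_mem_singleton hx⟩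
  · refine ⟨r, hr.isWalk, fun x hx hxs => ?_⟩
    by_contra hxσ
    by_cases hxκ : x = κ
    · exact hκ (hxκ ▸ hxs)
    · exact hint x hx hxσ hxκ hxs

theorem SuperSimple.eq_or_occBefore_of_isWalk (hρ : SuperSimple E ι o ρ)
    (hρκ : SuperSimple E ι κ ρ) (hσ : SimpleNode E ι o σ) (hw : IsWalk E σ κ w)
    (hρw : ρ ∈ w → ρ = σ) : ρ = σ ∨ OccBefore E ι o ρ σ := by
  obtain h | h := or_assoc.2 (hρ.trichotomy hσ)
  · exact h
  obtain ⟨w₁, hw₁, hρw₁⟩ := h.exists_isWalk_input_not_mem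
  rcases List.mem_append.1 (hρκ.mem_of_isWalk (hw₁.append hw)) with h' | h'
  · exact absurd h' hρw₁
  · exact absurd (hρw (List.mem_of_mem_tail h')).symm h.ne

theorem SuperSimple.superSimple_of_isSigmaU (hρ : SuperSimple E ι o ρ)
    (hσ : IsSigmaU E ι o κ σ) (h : ρ = σ ∨ OccBefore E ι o ρ σ) : SuperSimple E ι κ ρ := by
  have hι : SimpleNode E ι o ι :=
    let ⟨p, hp, _⟩ := hσ.simpleNode
    ⟨p, hp, hp.isWalk.head_mem⟩
  intro q hq
  rcases hσ with ⟨-, rfl⟩ | ⟨hκ, -, -, hmin⟩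
  · exact hρ.mem_of_isWalk_of_occBefore h hq.isWalk
  by_contra hρq
  obtain ⟨u, σ', v, rfl, hσ', hv⟩ :=
    List.exists_split_at_last (SimpleNode E ι o) ⟨ι, hq.isWalk.head_mem, hι⟩
  have hw := (hq.isWalk.split).1
  have hρw : ρ ∉ u ++ [σ'] := fun h => hρq (by simp only [List.mem_append, List.mem_cons] at h ⊢; tauto)
  have hne : σ' ≠ σ := by
    rintro rfl
    exact hρw (hρ.mem_of_isWalk_of_occBefore h hw)
  have happ : AppPath E ι o σ' κ (σ' :: v) := by
    refine ⟨hq.suffix, ⟨κ, hq.suffix.isWalk.last_mem, hκ⟩, ?_⟩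
    rintro x (_ | ⟨_, hx⟩) hxσ' -
    exacts [absurd rfl hxσ', hv x hx]
  exact hmin σ' hσ' ⟨_, happ⟩
    ⟨hne, ρ, hρ, .inr (hρ.occBefore_of_not_mem hσ' hw hρw), h.imp Eq.symm id⟩

end Network

theorem shared_superSimple_general {V : Type*} (E : V → V → Prop) (ι o : V)
    (ρ κ σu : V)
    (hρ : SuperSimple E ι o ρ) (hσ : IsSigmaU E ι o κ σu) :
    SuperSimple E ι κ ρ ↔ SLe E ι o ρ σu := by
  rw [hρ.sLe_iff]
  refine ⟨fun hρκ => ?_, hρ.superSimple_of_isSigmaU hσ⟩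
  obtain ⟨w, hw, hwσ⟩ := hσ.exists_isWalk
  obtain ⟨p, hp, -⟩ := hσ.simpleNode
  exact hρ.eq_or_occBefore_of_isWalk hρκ hσ.simpleNode hw fun hρw => hwσ ρ hρw ⟨p, hp, hρ p hp⟩

/-- A super-simple node `ρ` of `G` is super-simple in `G(κ)` iff
`ρ ⪯ σᵘ(κ)`. -/
theorem shared_superSimple {V : Type*} (E : V → V → Prop) (ι o : V)
    (hcore : Core E ι o) (ρ κ σu : V)
    (hρ : SuperSimple E ι o ρ) (hσ : IsSigmaU E ι o κ σu) :
    SuperSimple E ι κ ρ ↔ SLe E ι o ρ σu :=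
  shared_superSimple_general E ι o ρ κ σu hρ hσ
end

section
/- Let G be a core input-output network, A an appendage subnetwork of G, and κ a node of G with σᵘ(κ) ≺ σᵈ(A) in the simple-node partial order. Then A is not an appendage subnetwork of G(κ). -/
/-!
Let `τ ∈ A` have an appendage path `Q` to `σᵈ(A)`. Since `σᵘ(κ) ≺ σᵈ(A)`, some `ιo`-simple path
passes through `σᵘ(κ)` and later through `σᵈ(A)`; its part before `σᵘ(κ)`, followed by an appendage
path to `κ`, yields an `ικ`-simple path `p₀` whose simple nodes all precede `σᵘ(κ)`. Any walk from
`ι` entering `Q` or the part of the path after `σᵈ(A)` would, at its first such node, splice into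
an `ιo`-simple path through an appendage node; hence `p₀` avoids `Q`, and `σᵈ(A)` reaches `τ`
outside `p₀`. So `τ` and `σᵈ(A)` share a transitive component of the complement of `p₀`. As `τ`
is super-appendage in `G(κ)`, this puts `σᵈ(A)` into the appendage subnetwork `A` of `G(κ)`,
although it is a simple node of `G`.
-/

open Relation

section Network

variable {V : Type*} {E : V → V → Prop}

section Paths

variable {a b c : V} {p q l₁ l₂ : List V}

theorem IsSPath.head_mem (hp : IsSPath E a b p) : a ∈ p :=
  List.mem_of_mem_head? hp.2.2.1

theorem IsSPath.last_mem (hp : IsSPath E a b p) : b ∈ p :=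
  List.mem_of_mem_getLast? hp.2.2.2

theorem IsSPath.singleton (a : V) : IsSPath E a a [a] :=
  ⟨List.isChain_singleton a, List.nodup_singleton a, rfl, rfl⟩

theorem IsSPath.cons (hp : IsSPath E b c p) (hab : E a b) (ha : a ∉ p) :
    IsSPath E a c (a :: p) := by
  obtain ⟨hch, hnd, hh, hl⟩ := hp
  cases p with
  | nil => simp at hh
  | cons d p =>
    obtain rfl : d = b := by simpa using hh
    exact ⟨List.isChain_cons_cons.2 ⟨hab, hch⟩, List.nodup_cons.2 ⟨ha, hnd⟩, rfl,
      by rwa [List.getLast?_cons_cons]⟩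

theorem IsSPath.append (hp : IsSPath E a b p) (hq : IsSPath E b c (b :: q))
    (hpq : ∀ x ∈ p, x ∉ q) : IsSPath E a c (p ++ q) := by
  obtain ⟨hpc, hpn, hph, hpl⟩ := hp
  obtain ⟨hqc, hqn, -, hql⟩ := hq
  have hp₀ : p ≠ [] := by rintro rfl; simp at hph
  refine ⟨List.isChain_append.2 ⟨hpc, hqc.tail, fun x hx y hy => ?_⟩,
    List.nodup_append.2 ⟨hpn, (List.nodup_cons.1 hqn).2, fun x hx y hy hxy => hpq x hx (hxy ▸ hy)⟩,
    by rwa [List.head?_append_of_ne_nil _ hp₀], ?_⟩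
  · obtain rfl : x = b := by rw [hpl] at hx; simpa using hx.symm
    exact List.isChain_cons.1 hqc |>.1 y hy
  · cases q with
    | nil =>
      obtain rfl : b = c := by simpa using hql
      simpa using hpl
    | cons d q => rwa [List.getLast?_append_of_ne_nil _ (List.cons_ne_nil d q),
        ← List.getLast?_cons_cons]

theorem IsSPath.split (hp : IsSPath E a b (l₁ ++ c :: l₂)) :
    IsSPath E a c (l₁ ++ [c]) ∧ IsSPath E c b (c :: l₂) ∧ ∀ x ∈ l₁ ++ [c], x ∉ l₂ := by
  obtain ⟨hch, hnd, hh, hl⟩ := hp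
  have hassoc : l₁ ++ c :: l₂ = (l₁ ++ [c]) ++ l₂ := by simp
  rw [hassoc] at hch hnd
  obtain ⟨hnd₁, -, hdisj⟩ := List.nodup_append.1 hnd
  refine ⟨⟨hch.left_of_append, hnd₁, ?_, List.getLast?_concat⟩,
    ⟨?_, ?_, rfl, by rwa [← List.getLast?_append_cons l₁]⟩, fun x hx hx' => hdisj x hx x hx' rfl⟩
  · cases l₁ <;> simpa using hh
  · exact (hassoc ▸ hch).right_of_append
  · exact (List.nodup_append.1 (hassoc ▸ hnd)).2.1

end Paths

section Reach

variable {S T : Set V} {a b x : V}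

theorem ReachIn.mono (hST : S ⊆ T) (h : ReachIn E S a b) : ReachIn E T a b :=
  ReflTransGen.mono (fun _ _ e => ⟨e.1, hST e.2.1, hST e.2.2⟩) _ _ h

theorem ReachIn.mem_of_mem_left (h : ReachIn E S a b) (ha : a ∈ S) : b ∈ S := by
  induction h with
  | refl => exact ha
  | tail _ e => exact e.2.2

theorem ReachIn.mem_of_mem_right (h : ReachIn E S a b) (hb : b ∈ S) : a ∈ S := by
  induction h using ReflTransGen.head_induction_on with
  | refl => exact hb
  | head e => exact e.2.1

theorem reachIn_of_isChain_head {l : List V} (hl : l.IsChain E) (ha : l.head? = some a)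
    (hx : x ∈ l) : ReachIn E {y | y ∈ l} a x := by
  induction l generalizing a with
  | nil => simp at hx
  | cons d l ih =>
    obtain rfl : d = a := by simpa using ha
    rcases List.mem_cons.1 hx with rfl | hx
    · exact ReflTransGen.refl
    cases l with
    | nil => simp at hx
    | cons e l =>
      obtain ⟨hde, hl⟩ := List.isChain_cons_cons.1 hl
      exact ReflTransGen.head ⟨hde, by simp, by simp⟩
        ((ih hl rfl hx).mono fun y hy => List.mem_cons_of_mem d hy)

theorem reachIn_of_isChain_getLast {l : List V} (hl : l.IsChain E) (hb : l.getLast? = some b)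
    (hx : x ∈ l) : ReachIn E {y | y ∈ l} x b := by
  induction l generalizing x with
  | nil => simp at hx
  | cons d l ih =>
    cases l with
    | nil =>
      obtain rfl : x = d := by simpa using hx
      obtain rfl : x = b := by simpa using hb
      exact ReflTransGen.refl
    | cons e l =>
      obtain ⟨hde, hl⟩ := List.isChain_cons_cons.1 hl
      rw [List.getLast?_cons_cons] at hb
      have ih' : ∀ y ∈ e :: l, ReachIn E {y | y ∈ d :: e :: l} y b := fun y hy =>
        (ih hl hb hy).mono fun z hz => List.mem_cons_of_mem d hz
      rcases List.mem_cons.1 hx with rfl | hx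
      · exact ReflTransGen.head ⟨hde, by simp, by simp⟩ (ih' e (by simp))
      · exact ih' x hx

theorem IsSPath.reachIn_from_head {p : List V} (hp : IsSPath E a b p) (hx : x ∈ p) :
    ReachIn E {y | y ∈ p} a x :=
  reachIn_of_isChain_head hp.1 hp.2.2.1 hx

theorem IsSPath.reachIn_to_last {p : List V} (hp : IsSPath E a b p) (hx : x ∈ p) :
    ReachIn E {y | y ∈ p} x b :=
  reachIn_of_isChain_getLast hp.1 hp.2.2.2 hx

theorem IsSPath.reachIn {p : List V} (hp : IsSPath E a b p) : ReachIn E {y | y ∈ p} a b :=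
  hp.reachIn_from_head hp.last_mem

theorem exists_isSPath_of_reachIn (h : ReachIn E S a b) (ha : a ∈ S) :
    ∃ p, IsSPath E a b p ∧ ∀ x ∈ p, x ∈ S := by
  induction h with
  | refl => exact ⟨[a], IsSPath.singleton a, by simpa⟩
  | @tail b c _ e ih =>
    obtain ⟨p, hp, hpS⟩ := ih
    by_cases hc : c ∈ p
    · obtain ⟨l₁, l₂, rfl⟩ := List.append_of_mem hc
      refine ⟨l₁ ++ [c], hp.split.1, fun x hx => hpS x ?_⟩
      simp only [List.mem_append, List.mem_cons] at hx ⊢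
      tauto
    · have hbc : b ∉ [c] := by simpa using fun h : b = c => hc (h ▸ hp.last_mem)
      have hpc : ∀ x ∈ p, x ∉ [c] := fun x hx hxc => hc (List.mem_singleton.1 hxc ▸ hx)
      refine ⟨p ++ [c], hp.append ((IsSPath.singleton c).cons e.1 hbc) hpc, fun x hx => ?_⟩
      rcases List.mem_append.1 hx with hx | hx
      · exact hpS x hx
      · exact (List.mem_singleton.1 hx) ▸ e.2.2

end Reach

section Splicing

variable {ι o : V} {M P R S T : Set V}

theorem simpleNode_of_reachIn_of_reachIn {u z : V} (hST : Disjoint S T) (hι : ι ∈ S)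
    (hιu : ReachIn E S ι u) (huz : E u z) (hz : z ∈ T) (hzo : ReachIn E T z o) :
    SimpleNode E ι o z := by
  obtain ⟨p₁, hp₁, hp₁S⟩ := exists_isSPath_of_reachIn hιu hι
  obtain ⟨p₂, hp₂, hp₂T⟩ := exists_isSPath_of_reachIn hzo hz
  have hdisj : ∀ x ∈ p₁, x ∉ p₂ := fun x hx hx' =>
    Set.disjoint_left.1 hST (hp₁S x hx) (hp₂T x hx')
  exact ⟨p₁ ++ p₂, hp₁.append (hp₂.cons huz (hdisj u hp₁.last_mem)) hdisj,
    List.mem_append_right p₁ hp₂.head_mem⟩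

/-- The first node of `R` on a walk from `ι` inside `M` is simple, because `R` drains into `o`. -/
theorem exists_simpleNode_of_reachIn (hR : ∀ z ∈ R, ReachIn E R z o) (hι : ι ∈ M) {y : V}
    (hy : ReachIn E M ι y) (hyR : y ∈ R) : ∃ z ∈ M ∩ R, SimpleNode E ι o z := by
  by_contra! hno
  have hιR : ι ∉ R := fun hιR => by
    obtain ⟨p, hp, -⟩ := exists_isSPath_of_reachIn (hR ι hιR) hιR
    exact hno ι ⟨hι, hιR⟩ ⟨p, hp, hp.head_mem⟩
  have hwalk : ∀ y, ReachIn E M ι y → ReachIn E (M \ R) ι y := by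
    intro y hy
    induction hy with
    | refl => exact ReflTransGen.refl
    | @tail c y _ e ih =>
      have hc : c ∈ M \ R := ih.mem_of_mem_left ⟨hι, hιR⟩
      have hyR : y ∉ R := fun hyR => hno y ⟨e.2.2, hyR⟩
        (simpleNode_of_reachIn_of_reachIn Set.disjoint_sdiff_left ⟨hι, hιR⟩ ih e.1 hyR (hR y hyR))
      exact ih.tail ⟨e.1, hc, e.2.2, hyR⟩
  exact ((hwalk y hy).mem_of_mem_left ⟨hι, hιR⟩).2 hyR

/-- Cut a walk at its last exit from `P`. -/
theorem reachIn_union_of_reflTransGen {a b : V} (hab : ReflTransGen E a b) (hb : b ∉ P)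
    (hP : ∀ x ∈ P, ReachIn E P a x) : ReachIn E (P ∪ {x | ReachIn E Pᶜ x b}) a b := by
  set K := {x | ReachIn E Pᶜ x b}
  suffices ∀ x, ReflTransGen E x b →
      ReachIn E (P ∪ K) a b ∨ x ∈ K ∧ ReachIn E (P ∪ K) x b by
    rcases this a hab with h | ⟨-, h⟩ <;> exact h
  intro x hx
  induction hx using ReflTransGen.head_induction_on with
  | refl => exact Or.inr ⟨ReflTransGen.refl, ReflTransGen.refl⟩
  | @head x y e _ ih =>
    rcases ih with h | ⟨hyK, hyb⟩
    · exact Or.inl h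
    by_cases hx : x ∈ P
    · exact Or.inl (((hP x hx).mono Set.subset_union_left).trans
        (ReflTransGen.head ⟨e, Or.inl hx, Or.inr hyK⟩ hyb))
    · have hxK : x ∈ K := ReflTransGen.head ⟨e, hx, hyK.mem_of_mem_right hb⟩ hyK
      exact Or.inr ⟨hxK, ReflTransGen.head ⟨e, Or.inr hxK, Or.inr hyK⟩ hyb⟩

theorem exists_simpleNode_reachIn_compl (hR : ∀ z ∈ R, ReachIn E R z o) (hPR : Disjoint P R)
    (hι : ι ∈ P) (hP : ∀ x ∈ P, ReachIn E P ι x) {τ : V} (hτ : τ ∈ R)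
    (hιτ : ReflTransGen E ι τ) : ∃ z ∈ R, SimpleNode E ι o z ∧ ReachIn E Pᶜ z τ := by
  obtain ⟨z, ⟨hzM, hzR⟩, hz⟩ := exists_simpleNode_of_reachIn hR (Or.inl hι)
    (reachIn_union_of_reflTransGen hιτ (Set.disjoint_right.1 hPR hτ) hP) hτ
  exact ⟨z, hzR, hz, hzM.resolve_left (Set.disjoint_right.1 hPR hzR)⟩

end Splicing

section Order

variable {ι o a b ρ : V}

theorem OccBefore.exists_split (h : OccBefore E ι o a b) :
    ∃ l₁ l₂ l₃, IoSPath E ι o (l₁ ++ a :: (l₂ ++ b :: l₃)) := by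
  obtain ⟨p, hp, hab⟩ := h
  obtain ⟨r₁, r₂, rfl, ha, hb⟩ := List.cons_sublist_iff.1 hab
  obtain ⟨l₁, l₂, rfl⟩ := List.append_of_mem ha
  obtain ⟨m₁, m₂, rfl⟩ := List.append_of_mem (List.singleton_sublist.1 hb)
  exact ⟨l₁, l₂ ++ m₁, m₂, by simpa using hp⟩

theorem occBefore_of_mem_append {l₁ l₂ : List V} (hp : IoSPath E ι o (l₁ ++ l₂)) (ha : a ∈ l₁)
    (hb : b ∈ l₂) : OccBefore E ι o a b :=
  ⟨_, hp, (List.singleton_sublist.2 ha).append (List.singleton_sublist.2 hb)⟩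

theorem OccBefore.exists_disjoint (h : OccBefore E ι o a b) :
    ∃ p q, IsSPath E ι a p ∧ IsSPath E b o q ∧ ∀ x ∈ p, x ∉ q := by
  obtain ⟨l₁, l₂, l₃, hp⟩ := h.exists_split
  obtain ⟨hpre, -, hdisj⟩ := IsSPath.split hp
  have hp' : IoSPath E ι o ((l₁ ++ a :: l₂) ++ b :: l₃) := by simpa using hp
  exact ⟨_, _, hpre, (IsSPath.split hp').2.1,
    fun x hx hx' => hdisj x hx (List.mem_append_right l₂ hx')⟩

/-- A walk `ι → a → o` avoiding `ρ` is spliced from the two orders, and it cannot exist. -/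
theorem SuperSimple.not_occBefore_of_occBefore (hρ : SuperSimple E ι o ρ)
    (h₁ : OccBefore E ι o a ρ) : ¬ OccBefore E ι o ρ a := by
  intro h₂
  obtain ⟨p₁, q₁, hp₁, hq₁, hd₁⟩ := h₁.exists_disjoint
  obtain ⟨p₂, q₂, hp₂, hq₂, hd₂⟩ := h₂.exists_disjoint
  have hwalk : ReachIn E {x | x ∈ p₁ ∨ x ∈ q₂} ι o :=
    (hp₁.reachIn.mono fun _ => Or.inl).trans (hq₂.reachIn.mono fun _ => Or.inr)
  obtain ⟨p, hp, hpX⟩ := exists_isSPath_of_reachIn hwalk (Or.inl hp₁.head_mem)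
  rcases hpX ρ (hρ p hp) with h | h
  · exact hd₁ ρ h hq₁.head_mem
  · exact hd₂ ρ hp₂.last_mem h

theorem OccBefore.trans_superSimple (hρ : SuperSimple E ι o ρ) (h₁ : OccBefore E ι o a ρ)
    (h₂ : OccBefore E ι o ρ b) : OccBefore E ι o a b := by
  obtain ⟨l₁, l₂, l₃, hq⟩ := h₁.exists_split
  obtain ⟨m₁, m₂, m₃, hq'⟩ := h₂.exists_split
  have hq₁ : IoSPath E ι o ((l₁ ++ a :: l₂) ++ ρ :: l₃) := by simpa using hq
  have hq₂ : IoSPath E ι o ((m₁ ++ [ρ]) ++ (m₂ ++ b :: m₃)) := by simpa using hq'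
  obtain ⟨-, hpost, hdisj⟩ := IsSPath.split hq'
  have hglue := (IsSPath.split hq₁).1.append hpost fun x hx hx' => by
    rcases List.mem_append.1 hx with hx | hx
    · exact hρ.not_occBefore_of_occBefore (occBefore_of_mem_append hq₁ hx List.mem_cons_self)
        (occBefore_of_mem_append hq₂ (by simp) hx')
    · exact hdisj ρ (by simp) (List.mem_singleton.1 hx ▸ hx')
  exact occBefore_of_mem_append hglue (by simp) (by simp)

theorem SLt.occBefore (h : SLt E ι o a b) : OccBefore E ι o a b := by
  obtain ⟨hne, ρ, hρ, rfl | ha, rfl | hb⟩ := h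
  · exact absurd rfl hne
  · exact hb
  · exact ha
  · exact ha.trans_superSimple hρ hb

end Order

section Components

variable {ι o a b τ x : V} {s t : Set V} {A : Set V}

theorem SameTCIn.mono (hst : s ⊆ t) (h : SameTCIn E s a b) : SameTCIn E t a b :=
  ⟨hst h.1, hst h.2.1, h.2.2.1.mono hst, h.2.2.2.mono hst⟩

theorem SameTCIn.trans {c : V} (h₁ : SameTCIn E s a b) (h₂ : SameTCIn E s b c) :
    SameTCIn E s a c :=
  ⟨h₁.1, h₂.2.1, h₁.2.2.1.trans h₂.2.2.1, h₂.2.2.2.trans h₁.2.2.2⟩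

/-- Every node on a cycle through `a` inside `s` lies in the component of `a`, so a component
of `s` contained in `t` is still strongly connected inside `t`. -/
theorem SameTCIn.of_component_subset (h : SameTCIn E s a b)
    (hst : ∀ z, SameTCIn E s a z → z ∈ t) : SameTCIn E t a b := by
  obtain ⟨ha, hb, hab, hba⟩ := h
  have key : ∀ x y, ReachIn E s x y → ReachIn E s a x → ReachIn E s y a → ReachIn E t x y := by
    intro x y hxy
    induction hxy with
    | refl => exact fun _ _ => ReflTransGen.refl
    | @tail c y hxc e ih =>
      intro hax hya
      have hca : ReachIn E s c a := ReflTransGen.head e hya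
      have hac : ReachIn E s a c := hax.trans hxc
      exact (ih hax hca).tail
        ⟨e.1, hst c ⟨ha, e.2.1, hac, hca⟩, hst y ⟨ha, e.2.2, hac.tail e, hya⟩⟩
  exact ⟨hst a ⟨ha, ha, ReflTransGen.refl, ReflTransGen.refl⟩, hst b ⟨ha, hb, hab, hba⟩,
    key a b hab ReflTransGen.refl hba, key b a hba hab ReflTransGen.refl⟩

theorem SuperAppendage.of_sameTCIn_appendage (hτ : SuperAppendage E ι o τ)
    (hx : SameTCIn E {v | Appendage E ι o v} τ x) : SuperAppendage E ι o x := by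
  have hsub : ∀ p, IoSPath E ι o p → {v | Appendage E ι o v} ⊆ {v | v ∉ p} :=
    fun p hp v hv hvp => hv ⟨p, hp, hvp⟩
  exact ⟨hx.2.1, fun p hp _ y hy =>
    hτ.2 p hp (hsub p hp hx.1) y ((hx.mono (hsub p hp)).trans hy)⟩

theorem SuperAppendage.sameTCIn_of_compl {p : List V} (hτ : SuperAppendage E ι o τ)
    (hp : IoSPath E ι o p) (hτp : τ ∉ p) (h : SameTCIn E {v | v ∉ p} τ x) :
    SameTCIn E {v | SuperAppendage E ι o v} τ x :=
  (h.of_component_subset (hτ.2 p hp hτp)).of_component_subset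
    fun _ hz => hτ.of_sameTCIn_appendage hz

theorem IsAppSubnet.superAppendage_of_mem (hA : IsAppSubnet E ι o A) (hx : x ∈ A) :
    SuperAppendage E ι o x := by
  obtain ⟨τ, -, rfl⟩ := hA
  exact hx.2.1

theorem IsAppSubnet.mem_of_sameTCIn (hA : IsAppSubnet E ι o A) (hx : x ∈ A)
    (h : SameTCIn E {v | SuperAppendage E ι o v} x b) : b ∈ A := by
  obtain ⟨τ, -, rfl⟩ := hA
  exact SameTCIn.trans hx h

end Components

theorem IsSigmaU.exists_ioSPath {ι o κ σ : V} {pre : List V} (hu : IsSigmaU E ι o κ σ)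
    (hpre : IsSPath E ι σ pre) :
    ∃ p, IoSPath E ι κ p ∧ ∀ z ∈ p, SimpleNode E ι o z → z ∈ pre := by
  suffices ∃ W : Set V, ι ∈ W ∧ κ ∈ W ∧ (∀ x ∈ W, ReachIn E W ι x) ∧
      ∀ z ∈ W, SimpleNode E ι o z → z ∈ pre by
    obtain ⟨W, hι, hκ, hW, hWpre⟩ := this
    obtain ⟨p, hp, hpW⟩ := exists_isSPath_of_reachIn (hW κ hκ) hι
    exact ⟨p, hp, fun z hz => hWpre z (hpW z hz)⟩
  rcases hu with ⟨-, rfl⟩ | ⟨hκ, -, ⟨B, hB, -, hBapp⟩, -⟩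
  · exact ⟨{x | x ∈ pre}, hpre.head_mem, hpre.last_mem, fun x hx => hpre.reachIn_from_head hx,
      fun z hz _ => hz⟩
  refine ⟨{x | x ∈ pre ∨ x ∈ B}, Or.inl hpre.head_mem, Or.inr hB.last_mem, ?_, ?_⟩
  · rintro x (hx | hx)
    · exact (hpre.reachIn_from_head hx).mono fun _ => Or.inl
    · exact (hpre.reachIn.mono fun _ => Or.inl).trans
        ((hB.reachIn_from_head hx).mono fun _ => Or.inr)
  · rintro z (hz | hz) hzs
    · exact hz
    by_contra hzpre
    exact hBapp z hz (fun h => hzpre (h ▸ hpre.last_mem)) (fun h => hκ (h ▸ hzs)) hzs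

/-- `p` misses `Q ∪ post`, and `σ` gets back to `τ` outside `p` through the first node of
`Q ∪ post` on the last stretch outside `p` of a walk `ι ⇝ τ`: that node is simple, so on `post`. -/
theorem sameTCIn_compl_of_appendage_isSPath {ι o κ τ σ : V} {Q post p : List V}
    (hQ : IsSPath E τ σ Q) (hQapp : ∀ x ∈ Q, x ≠ σ → Appendage E ι o x)
    (hpost : IsSPath E σ o post) (hp : IsSPath E ι κ p)
    (hppost : ∀ z ∈ p, SimpleNode E ι o z → z ∉ post) (hιτ : ReflTransGen E ι τ) :
    SameTCIn E {v | v ∉ p} τ σ := by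
  set R : Set V := {x | x ∈ Q ∨ x ∈ post}
  have hRo : ∀ z ∈ R, ReachIn E R z o := by
    rintro z (hz | hz)
    · exact ((hQ.reachIn_to_last hz).mono fun _ => Or.inl).trans
        (hpost.reachIn.mono fun _ => Or.inr)
    · exact (hpost.reachIn_to_last hz).mono fun _ => Or.inr
  have hRpost : ∀ z ∈ R, SimpleNode E ι o z → z ∈ post := by
    rintro z (hz | hz) hzs
    · obtain rfl : z = σ := by_contra fun h => hQapp z hz h hzs
      exact hpost.head_mem
    · exact hz
  have hpR : Disjoint {x | x ∈ p} R := by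
    refine Set.disjoint_left.2 fun y hy hyR => ?_
    obtain ⟨z, ⟨hzp, hzR⟩, hz⟩ :=
      exists_simpleNode_of_reachIn hRo hp.head_mem (hp.reachIn_from_head hy) hyR
    exact hppost z hzp hz (hRpost z hzR hz)
  have hRp : R ⊆ {v | v ∉ p} := fun _ hx => Set.disjoint_right.1 hpR hx
  obtain ⟨z, hzR, hz, hzτ⟩ := exists_simpleNode_reachIn_compl hRo hpR hp.head_mem
    (fun _ hx => hp.reachIn_from_head hx) (Or.inl hQ.head_mem) hιτ
  exact ⟨hRp (Or.inl hQ.head_mem), hRp (Or.inl hQ.last_mem),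
    hQ.reachIn.mono fun _ hx => hRp (Or.inl hx),
    ((hpost.reachIn_from_head (hRpost z hzR hz)).mono fun _ hx => hRp (Or.inr hx)).trans hzτ⟩

end Network

/-- If `σᵘ(κ) ≺ σᵈ(A)`, then `A` is not an appendage subnetwork of `G(κ)`. -/
theorem kappa_prec_A {V : Type*} (E : V → V → Prop) (ι o : V)
    (hcore : Core E ι o) (A : Set V) (κ σu σd : V)
    (hA : IsAppSubnet E ι o A)
    (hu : IsSigmaU E ι o κ σu) (hd : IsSigmaD E ι o A σd)
    (hlt : SLt E ι o σu σd) :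
    ¬ IsAppSubnet E ι κ A := by
  intro hκA
  obtain ⟨hσd, ⟨τ, hτA, Q, hQ, -, hQint⟩, -⟩ := hd
  obtain ⟨pre, post, hpre, hpost, hdisj⟩ := hlt.occBefore.exists_disjoint
  obtain ⟨p₀, hp₀, hp₀pre⟩ := hu.exists_ioSPath hpre
  have hQapp : ∀ x ∈ Q, x ≠ σd → Appendage E ι o x := fun x hx hxσ => by
    by_cases hxτ : x = τ
    · exact hxτ ▸ (hA.superAppendage_of_mem hτA).1
    · exact hQint x hx hxτ hxσ
  have hτσd : SameTCIn E {v | v ∉ p₀} τ σd := sameTCIn_compl_of_appendage_isSPath hQ hQapp hpost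
    hp₀ (fun z hz hzs => hdisj z (hp₀pre z hz hzs)) (hcore τ).1
  have hσdA : σd ∈ A := hκA.mem_of_sameTCIn hτA <|
    (hκA.superAppendage_of_mem hτA).sameTCIn_of_compl hp₀ hτσd.1 hτσd
  exact (hA.superAppendage_of_mem hσdA).1 hσd
end
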